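/- In the Heisenberg group G = ⟨a,b,c | bab⁻¹a⁻¹ = c, ac = ca, bc = cb⟩ with generating set S = {a,b,c}, and H the cyclic subgroup generated by c, the distance from the element a^k b^ℓ c^p to H in the word metric d_S equals |k| + |ℓ|. -/

import Mathlib

/-! The map `a^k b^l c^p ↦ |k| + |l|` is subadditive and at most `1` on the letters `a^±1, b^±1,
c^±1`, so it bounds the word length from below; since multiplying by `c^m` does not change `k`
and `l`, it bounds `d_S(a^k b^l c^p, c^m)` below by `|k| + |l|` for every `m`. For `m = p` the
bound is attained: `c` is central, so `(a^k b^l c^p)⁻¹ c^p = b^(-l) a^(-k)`. -/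

/-- The discrete Heisenberg group in normal-form coordinates: the element
`⟨k, l, p⟩` represents `a^k b^l c^p`.  (Equivalently, upper triangular `3×3`
integer matrices with `1`s on the diagonal.) -/
@[ext] structure Heis where
  k : ℤ
  l : ℤ
  p : ℤ

namespace Heis

instance : Mul Heis := ⟨fun x y => ⟨x.k + y.k, x.l + y.l, x.p + y.p + x.l * y.k⟩⟩
instance : One Heis := ⟨⟨0, 0, 0⟩⟩
instance : Inv Heis := ⟨fun x => ⟨-x.k, -x.l, -x.p + x.l * x.k⟩⟩

lemma mul_def (x y : Heis) : x * y = ⟨x.k + y.k, x.l + y.l, x.p + y.p + x.l * y.k⟩ := rfl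
lemma one_def : (1 : Heis) = ⟨0, 0, 0⟩ := rfl
lemma inv_def (x : Heis) : x⁻¹ = ⟨-x.k, -x.l, -x.p + x.l * x.k⟩ := rfl

instance : Group Heis where
  mul_assoc x y z := by ext <;> simp [mul_def] <;> ring
  one_mul x := by ext <;> simp [mul_def, one_def]
  mul_one x := by ext <;> simp [mul_def, one_def]
  inv_mul_cancel x := by ext <;> simp [mul_def, inv_def, one_def]

/-- The generator `a`. -/
def a : Heis := ⟨1, 0, 0⟩
/-- The generator `b`. -/
def b : Heis := ⟨0, 1, 0⟩
/-- The generator `c`. -/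
def c : Heis := ⟨0, 0, 1⟩

end Heis


open Heis

/-- The word length of `g` with respect to the (symmetrized) alphabet `S`. -/
noncomputable def wordLength {G : Type*} [Group G] (S : Set G) (g : G) : ℕ :=
  sInf {n | ∃ w : List G, (∀ x ∈ w, x ∈ S ∨ x⁻¹ ∈ S) ∧ w.prod = g ∧ w.length = n}

/-- The word metric on `G` associated to the generating set `S`. -/
noncomputable def wordDist {G : Type*} [Group G] (S : Set G) (x y : G) : ℕ :=
  wordLength S (x⁻¹ * y)

/-- The generating set `S = {a,b,c}` of the Heisenberg group. -/
def heisGens : Set Heis := {a, b, c}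

section WordLength

variable {G : Type*} [Group G] {S : Set G}

theorem exists_word_of_mem_closure {g : G} (hg : g ∈ Subgroup.closure S) :
    ∃ w : List G, (∀ x ∈ w, x ∈ S ∨ x⁻¹ ∈ S) ∧ w.prod = g := by
  rw [← Subgroup.mem_toSubmonoid, Subgroup.closure_toSubmonoid] at hg
  obtain ⟨w, hw, rfl⟩ := Submonoid.exists_list_of_mem_closure hg
  exact ⟨w, fun x hx => hw x hx, rfl⟩

theorem exists_word_zpow {x : G} (hx : x ∈ S) (n : ℤ) :
    ∃ w : List G, (∀ y ∈ w, y ∈ S ∨ y⁻¹ ∈ S) ∧ w.prod = x ^ n ∧ w.length = n.natAbs := by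
  rcases Int.eq_nat_or_neg n with ⟨m, rfl | rfl⟩
  · refine ⟨List.replicate m x, fun y hy => ?_, by simp, by simp⟩
    exact .inl (List.eq_of_mem_replicate hy ▸ hx)
  · refine ⟨List.replicate m x⁻¹, fun y hy => ?_, by simp, by simp⟩
    exact .inr (List.eq_of_mem_replicate hy ▸ (inv_inv x).symm ▸ hx)

theorem wordLength_prod_le {w : List G} (hw : ∀ x ∈ w, x ∈ S ∨ x⁻¹ ∈ S) :
    wordLength S w.prod ≤ w.length :=
  Nat.sInf_le ⟨w, hw, rfl, rfl⟩

theorem wordLength_zpow_mul_zpow_le {x y : G} (hx : x ∈ S) (hy : y ∈ S) (m n : ℤ) :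
    wordLength S (x ^ m * y ^ n) ≤ m.natAbs + n.natAbs := by
  obtain ⟨u, hu, hu_prod, hu_len⟩ := exists_word_zpow hx m
  obtain ⟨v, hv, hv_prod, hv_len⟩ := exists_word_zpow hy n
  have huv : ∀ z ∈ u ++ v, z ∈ S ∨ z⁻¹ ∈ S := by
    simpa only [List.mem_append, or_imp, forall_and] using And.intro hu hv
  simpa [hu_prod, hv_prod, hu_len, hv_len] using wordLength_prod_le huv

theorem exists_word_length_eq_wordLength {g : G} (hg : g ∈ Subgroup.closure S) :
    ∃ w : List G, (∀ x ∈ w, x ∈ S ∨ x⁻¹ ∈ S) ∧ w.prod = g ∧ w.length = wordLength S g := by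
  obtain ⟨w, hw, hw_prod⟩ := exists_word_of_mem_closure hg
  exact Nat.sInf_mem (s := {n | ∃ w : List G, (∀ x ∈ w, x ∈ S ∨ x⁻¹ ∈ S) ∧ w.prod = g ∧
    w.length = n}) ⟨w.length, w, hw, hw_prod, rfl⟩

theorem le_wordLength (f : G → ℕ) (hf_one : f 1 = 0) (hf_mul : ∀ x y, f (x * y) ≤ f x + f y)
    (hf_letter : ∀ x, x ∈ S ∨ x⁻¹ ∈ S → f x ≤ 1) {g : G} (hg : g ∈ Subgroup.closure S) :
    f g ≤ wordLength S g := by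
  have hf_prod (w : List G) (hw : ∀ x ∈ w, x ∈ S ∨ x⁻¹ ∈ S) : f w.prod ≤ w.length := by
    induction w with
    | nil => simp [hf_one]
    | cons x w ih =>
      rw [List.forall_mem_cons] at hw
      calc f (x :: w).prod ≤ f x + f w.prod := hf_mul x w.prod
        _ ≤ 1 + w.length := add_le_add (hf_letter x hw.1) (ih hw.2)
        _ = (x :: w).length := by simp [add_comm]
  obtain ⟨w, hw, rfl, hw_len⟩ := exists_word_length_eq_wordLength hg
  exact hw_len ▸ hf_prod w hw

end WordLength

namespace Heis

theorem zpow_eq_of_l_mul_k_eq_zero (x : Heis) (hx : x.l * x.k = 0) (n : ℤ) :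
    x ^ n = ⟨n * x.k, n * x.l, n * x.p⟩ := by
  induction n using Int.induction_on with
  | zero => simp [one_def]
  | succ n ih =>
    rw [zpow_add_one, ih]
    ext <;> simp only [mul_def]
    · ring
    · ring
    · linear_combination n * hx
  | pred n ih =>
    rw [zpow_sub_one, ih]
    ext <;> simp only [mul_def, inv_def]
    · ring
    · ring
    · linear_combination (n + 1) * hx

@[simp] theorem a_zpow (n : ℤ) : a ^ n = ⟨n, 0, 0⟩ := by
  simpa [a] using zpow_eq_of_l_mul_k_eq_zero a rfl n

@[simp] theorem b_zpow (n : ℤ) : b ^ n = ⟨0, n, 0⟩ := by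
  simpa [b] using zpow_eq_of_l_mul_k_eq_zero b rfl n

@[simp] theorem c_zpow (n : ℤ) : c ^ n = ⟨0, 0, n⟩ := by
  simpa [c] using zpow_eq_of_l_mul_k_eq_zero c rfl n

theorem closure_heisGens : Subgroup.closure heisGens = ⊤ := by
  refine Subgroup.eq_top_iff' _ |>.mpr fun x => ?_
  have hx : x = a ^ x.k * b ^ x.l * c ^ x.p := by ext <;> simp [mul_def]
  have mem (y : Heis) (hy : y ∈ heisGens) (n : ℤ) : y ^ n ∈ Subgroup.closure heisGens :=
    zpow_mem (Subgroup.subset_closure hy) n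
  rw [hx]
  exact mul_mem (mul_mem (mem a (by simp [heisGens]) _) (mem b (by simp [heisGens]) _))
    (mem c (by simp [heisGens]) _)

def horizontalLength (x : Heis) : ℕ := x.k.natAbs + x.l.natAbs

theorem horizontalLength_mul_le (x y : Heis) :
    horizontalLength (x * y) ≤ horizontalLength x + horizontalLength y := by
  have hk := Int.natAbs_add_le x.k y.k
  have hl := Int.natAbs_add_le x.l y.l
  simp only [horizontalLength, mul_def]
  omega

theorem horizontalLength_inv (x : Heis) : horizontalLength x⁻¹ = horizontalLength x := by
  simp [horizontalLength, inv_def]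

theorem horizontalLength_le_one {x : Heis} (hx : x ∈ heisGens ∨ x⁻¹ ∈ heisGens) :
    horizontalLength x ≤ 1 := by
  have of_mem {y : Heis} (hy : y ∈ heisGens) : horizontalLength y ≤ 1 := by
    rcases hy with rfl | rfl | rfl <;> decide
  rcases hx with hx | hx
  · exact of_mem hx
  · exact horizontalLength_inv x ▸ of_mem hx

end Heis

/-- In the Heisenberg group with `S = {a,b,c}` and `H = ⟨c⟩`, the distance from
`a^k b^ℓ c^p` to `H` in the word metric equals `|k| + |ℓ|`. -/
theorem heisenberg_dist_to_center (k l p : ℤ) :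
    sInf {n : ℕ | ∃ m : ℤ, n = wordDist heisGens (a ^ k * b ^ l * c ^ p) (c ^ m)} =
      k.natAbs + l.natAbs := by
  have lower (m : ℤ) :
      k.natAbs + l.natAbs ≤ wordDist heisGens (a ^ k * b ^ l * c ^ p) (c ^ m) :=
    calc k.natAbs + l.natAbs = horizontalLength ((a ^ k * b ^ l * c ^ p)⁻¹ * c ^ m) := by
          simp [horizontalLength, mul_def, inv_def]
      _ ≤ _ := le_wordLength _ rfl horizontalLength_mul_le (fun _ => horizontalLength_le_one)
          (closure_heisGens ▸ Subgroup.mem_top _)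
  have upper : wordDist heisGens (a ^ k * b ^ l * c ^ p) (c ^ p) ≤ k.natAbs + l.natAbs :=
    calc wordDist heisGens (a ^ k * b ^ l * c ^ p) (c ^ p)
        = wordLength heisGens (b ^ (-l) * a ^ (-k)) := by
          rw [wordDist]; congr 1; ext <;> simp [mul_def, inv_def]
      _ ≤ (-l).natAbs + (-k).natAbs :=
          wordLength_zpow_mul_zpow_le (by simp [heisGens]) (by simp [heisGens]) _ _
      _ = k.natAbs + l.natAbs := by rw [Int.natAbs_neg, Int.natAbs_neg, add_comm]
  refine IsLeast.csInf_eq ⟨⟨p, (upper.antisymm (lower p)).symm⟩, ?_⟩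
  rintro n ⟨m, rfl⟩
  exact lower m
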